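/- arXiv:1911.11856 — 3 statements merged into one kernel-verified Lean document; each statement's English description precedes it below -/
import Mathlib

section
/- Let A be an n × n matrix all of whose entries are 0 or 1, with every row sum r_i = Σ_{j=1}^n A(i,j) ≥ 1. Then the permanent satisfies per(A) ≤ ∏_{i=1}^n (r_i!)^{1/r_i} (the Minc–Brègman bound). -/
/-! Schrijver's proof. The permanent counts the perfect matchings `M` of the relation
`A i j = 1`; argue by induction on the size. For a fixed row `i`, splitting `M` according to the
column `e i` and using convexity of `x log x` gives
`|M|^|M| ≤ rᵢ^|M| · ∏_{e ∈ M} |{e' ∈ M | e' i = e i}|`, and each such fibre is the set of perfect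
matchings of the minor without row `i` and column `e i`, bounded by induction. Multiplying over
all rows `i` and regrouping the factors by the rows `j` of the minors, for each `e ∈ M` the factors
of row `j` collapse to `rⱼ · (rⱼ - 1)! · (rⱼ!)^{(n - rⱼ)/rⱼ} = (rⱼ!)^{n/rⱼ}`, because exactly
`rⱼ - 1` of the columns `k ≠ e j` meet row `j`. Hence
`|M|^{n|M|} ≤ (∏ⱼ (rⱼ!)^{1/rⱼ})^{n|M|}`. -/

noncomputable def perm {n : ℕ} (A : Matrix (Fin n) (Fin n) ℝ) : ℝ :=
  ∑ σ : Equiv.Perm (Fin n), ∏ j, A j (σ j)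

open Finset Real
open scoped Nat

lemma sum_mul_log_sum_le {ι : Type*} (s : Finset ι) (t : ι → ℝ) (ht : ∀ k ∈ s, 0 ≤ t k) :
    (∑ k ∈ s, t k) * log (∑ k ∈ s, t k) ≤
      (∑ k ∈ s, t k) * log #s + ∑ k ∈ s, t k * log (t k) := by
  rcases s.eq_empty_or_nonempty with rfl | hs
  · simp
  set T := ∑ k ∈ s, t k
  have hc : (0 : ℝ) < #s := by exact_mod_cast hs.card_pos
  have jensen := convexOn_mul_log.map_sum_le (t := s) (w := fun _ => (#s : ℝ)⁻¹) (p := t)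
    (fun _ _ => by positivity) (by simp [hc.ne']) ht
  simp only [smul_eq_mul, ← mul_sum] at jensen
  have hT : T * log ((#s : ℝ)⁻¹ * T) = T * log T - T * log #s := by
    rcases eq_or_ne T 0 with h | h
    · simp [h]
    · rw [log_mul (inv_ne_zero hc.ne') h, log_inv]; ring
  have := mul_le_mul_of_nonneg_left jensen hc.le
  rw [← mul_assoc, mul_inv_cancel_left₀ hc.ne', mul_inv_cancel_left₀ hc.ne', hT] at this
  linarith

lemma natCast_pow_self_eq_exp (m : ℕ) : (m : ℝ) ^ m = exp (m * log m) := by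
  rcases Nat.eq_zero_or_pos m with rfl | hm
  · simp
  · rw [exp_nat_mul, exp_log (by exact_mod_cast hm)]

lemma sum_pow_sum_le {ι : Type*} (s : Finset ι) (t : ι → ℕ) :
    ((∑ k ∈ s, t k : ℕ) : ℝ) ^ (∑ k ∈ s, t k) ≤
      (#s : ℝ) ^ (∑ k ∈ s, t k) * ∏ k ∈ s, (t k : ℝ) ^ t k := by
  rcases s.eq_empty_or_nonempty with rfl | hs
  · simp
  have hc : (0 : ℝ) < #s := by exact_mod_cast hs.card_pos
  have key := sum_mul_log_sum_le s (fun k => (t k : ℝ)) (fun k _ => (t k).cast_nonneg)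
  set N := ∑ k ∈ s, t k
  calc (N : ℝ) ^ N = exp (N * log N) := natCast_pow_self_eq_exp N
    _ ≤ exp (N * log #s + ∑ k ∈ s, t k * log (t k)) := exp_le_exp.mpr (by simpa [N] using key)
    _ = (#s : ℝ) ^ N * ∏ k ∈ s, (t k : ℝ) ^ t k := by
      simp only [exp_add, exp_sum, exp_nat_mul, exp_log hc, natCast_pow_self_eq_exp]

lemma card_pow_card_le_prod_card_fiber {ι κ : Type*} [DecidableEq κ] (s : Finset ι)
    (t : Finset κ) (f : ι → κ) (hf : ∀ x ∈ s, f x ∈ t) :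
    (#s : ℝ) ^ #s ≤ (#t : ℝ) ^ #s * ∏ x ∈ s, (#{y ∈ s | f y = f x} : ℝ) := by
  rw [← prod_fiberwise_of_maps_to' hf fun k => (#{y ∈ s | f y = k} : ℝ)]
  simp only [prod_const]
  rw [card_eq_sum_card_fiberwise hf]
  exact sum_pow_sum_le t _

noncomputable def bregmanFactor (d : ℕ) : ℝ := (d ! : ℝ) ^ (d : ℝ)⁻¹

lemma bregmanFactor_nonneg (d : ℕ) : 0 ≤ bregmanFactor d :=
  Real.rpow_nonneg d !.cast_nonneg _

lemma bregmanFactor_pow_self (d : ℕ) : bregmanFactor d ^ d = d ! := by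
  rcases Nat.eq_zero_or_pos d with rfl | hd
  · simp
  · rw [bregmanFactor, ← Real.rpow_natCast, ← Real.rpow_mul (by positivity),
      inv_mul_cancel₀ (by positivity), Real.rpow_one]

lemma card_mul_prod_bregmanFactor_card_erase {β : Type*} [Fintype β] [DecidableEq β]
    {s : Finset β} {k₀ : β} (hk₀ : k₀ ∈ s) :
    (#s : ℝ) * ∏ k ∈ univ.erase k₀, bregmanFactor #(s.erase k) =
      bregmanFactor #s ^ Fintype.card β := by
  have hd : 0 < #s := card_pos.mpr ⟨k₀, hk₀⟩
  have hcompl : univ.erase k₀ \ s.erase k₀ = sᶜ := by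
    ext k; by_cases k = k₀ <;> simp_all
  have hout : ∏ k ∈ sᶜ, bregmanFactor #(s.erase k) = bregmanFactor #s ^ (Fintype.card β - #s) := by
    rw [prod_congr rfl fun k hk => by rw [erase_eq_of_notMem (mem_compl.mp hk)], prod_const,
      card_compl]
  have hin : ∏ k ∈ s.erase k₀, bregmanFactor #(s.erase k) = ((#s - 1)! : ℕ) := by
    rw [prod_congr rfl fun k hk => by rw [card_erase_of_mem (mem_of_mem_erase hk)], prod_const,
      card_erase_of_mem hk₀, bregmanFactor_pow_self]
  calc (#s : ℝ) * ∏ k ∈ univ.erase k₀, bregmanFactor #(s.erase k)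
      = bregmanFactor #s ^ (Fintype.card β - #s) * (#s * (#s - 1)! : ℕ) := by
        rw [← prod_sdiff (erase_subset_erase k₀ (subset_univ s)), hcompl, hout, hin]
        push_cast; ring
    _ = bregmanFactor #s ^ Fintype.card β := by
        rw [Nat.mul_factorial_pred hd.ne', ← bregmanFactor_pow_self, ← pow_add,
          Nat.sub_add_cancel (card_le_univ s)]

def Equiv.subtypeApplyEqEquiv {α β : Type*} [DecidableEq α] [DecidableEq β] (i : α) (k : β) :
    {e : α ≃ β // e i = k} ≃ ({a // a ≠ i} ≃ {b // b ≠ k}) :=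
  (((Equiv.optionSubtypeNe i).equivCongr (Equiv.refl β)).symm.subtypeEquiv
    fun _ => by simp).trans (Equiv.optionSubtype k)

abbrev minor {α β : Type*} (R : α → β → Prop) (i : α) (k : β) :
    {a // a ≠ i} → {b // b ≠ k} → Prop :=
  fun a b => R a b

lemma card_minor_row {α β : Type*} [Fintype β] [DecidableEq β] (R : α → β → Prop)
    [DecidableRel R] (i : α) (k : β) (a : {a // a ≠ i}) :
    #{b | minor R i k a b} = #(({b | R a b} : Finset β).erase k) := by
  rw [← Fintype.card_subtype, Fintype.card_congr (Equiv.subtypeSubtypeEquivSubtypeInter _ (R a)),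
    Fintype.card_subtype]
  congr 1; ext; simp [and_comm]

section
variable {α β : Type*} [Fintype α] [DecidableEq α] [Fintype β] [DecidableEq β]

def perfectMatchings (R : α → β → Prop) [DecidableRel R] : Finset (α ≃ β) :=
  {e | ∀ a, R a (e a)}

variable (R : α → β → Prop) [DecidableRel R]

@[simp]
lemma mem_perfectMatchings {e : α ≃ β} : e ∈ perfectMatchings R ↔ ∀ a, R a (e a) := by
  simp [perfectMatchings]

lemma card_filter_perfectMatchings_apply_eq {i : α} {k : β} (h : R i k) :
    #{e ∈ perfectMatchings R | e i = k} = #(perfectMatchings (minor R i k)) := by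
  simp only [perfectMatchings, filter_filter, ← Fintype.card_subtype]
  refine Fintype.card_congr ((Equiv.subtypeEquivRight fun _ => and_comm).trans
    ((Equiv.subtypeSubtypeEquivSubtypeInter (fun e : α ≃ β => e i = k) _).symm.trans
    ((Equiv.subtypeApplyEqEquiv i k).subtypeEquiv fun e => ?_)))
  simp only [Subtype.forall]
  constructor
  · exact fun hR a _ => hR a
  · intro hR a
    rcases eq_or_ne a i with rfl | ha
    · rwa [e.2]
    · exact hR a ha

lemma prod_mul_prod_bregmanFactor_erase_eq {e : α ≃ β} (he : e ∈ perfectMatchings R) :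
    ∏ i, ((#{b | R i b} : ℝ) *
      ∏ j ∈ univ.erase i, bregmanFactor #(({b | R j b} : Finset β).erase (e i))) =
      (∏ a, bregmanFactor #{b | R a b}) ^ Fintype.card β := by
  rw [prod_mul_distrib, prod_comm' (t' := univ) (s' := fun j => univ.erase j)
    (by simp [ne_comm]), ← prod_mul_distrib, ← prod_pow]
  refine prod_congr rfl fun j _ => ?_
  have hj : e j ∈ ({b | R j b} : Finset β) := by simpa using (mem_perfectMatchings R).mp he j
  rw [← card_mul_prod_bregmanFactor_card_erase hj]
  congr 1
  exact prod_equiv e (by simp) (by simp)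

lemma card_perfectMatchings_le_of_card_fiber_le [Nonempty α]
    (hfiber : ∀ i, ∀ e ∈ perfectMatchings R,
      (#{e' ∈ perfectMatchings R | e' i = e i} : ℝ) ≤
        ∏ j ∈ univ.erase i, bregmanFactor #(({b | R j b} : Finset β).erase (e i))) :
    (#(perfectMatchings R) : ℝ) ≤ ∏ a, bregmanFactor #{b | R a b} := by
  set M := perfectMatchings R
  set P := ∏ a, bregmanFactor #{b | R a b}
  have hP : 0 ≤ P := prod_nonneg fun a _ => bregmanFactor_nonneg _
  obtain hM | ⟨e₀, he₀⟩ := M.eq_empty_or_nonempty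
  · simpa [hM] using hP
  have row : ∀ i, (#M : ℝ) ^ #M ≤ ∏ e ∈ M,
      (#{b | R i b} * ∏ j ∈ univ.erase i, bregmanFactor #(({b | R j b} : Finset β).erase (e i))) :=
    fun i => calc
      (#M : ℝ) ^ #M ≤ (#{b | R i b} : ℝ) ^ #M * ∏ e ∈ M, (#{e' ∈ M | e' i = e i} : ℝ) :=
        card_pow_card_le_prod_card_fiber M _ (· i) fun e he => by
          simpa using (mem_perfectMatchings R).mp he i
      _ ≤ (#{b | R i b} : ℝ) ^ #M * ∏ e ∈ M,
            ∏ j ∈ univ.erase i, bregmanFactor #(({b | R j b} : Finset β).erase (e i)) := by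
        gcongr with e he
        exact hfiber i e he
      _ = _ := by rw [prod_mul_distrib, prod_const]
  have hexp : 0 < #M * Fintype.card α := Nat.mul_pos (card_pos.mpr ⟨e₀, he₀⟩) Fintype.card_pos
  refine le_of_pow_le_pow_left₀ hexp.ne' hP ?_
  calc (#M : ℝ) ^ (#M * Fintype.card α) = ∏ i : α, (#M : ℝ) ^ #M := by simp [pow_mul]
    _ ≤ ∏ i, ∏ e ∈ M, ((#{b | R i b} : ℝ) *
          ∏ j ∈ univ.erase i, bregmanFactor #(({b | R j b} : Finset β).erase (e i))) :=
        prod_le_prod (fun _ _ => by positivity) fun i _ => row i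
    _ = ∏ e ∈ M, P ^ Fintype.card α := by
        rw [prod_comm]
        refine prod_congr rfl fun e he => ?_
        rw [prod_mul_prod_bregmanFactor_erase_eq R he, Fintype.card_congr e]
    _ = P ^ (#M * Fintype.card α) := by rw [prod_const, ← pow_mul, mul_comm]

theorem card_perfectMatchings_le_prod_bregmanFactor :
    (#(perfectMatchings R) : ℝ) ≤ ∏ a, bregmanFactor #{b | R a b} := by
  obtain ⟨n, hn⟩ : ∃ n, Fintype.card α = n := ⟨_, rfl⟩
  induction n generalizing α β with
  | zero =>
    have : IsEmpty α := Fintype.card_eq_zero_iff.mp hn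
    simpa using card_le_one.mpr fun e _ f _ => Equiv.ext isEmptyElim
  | succ n ih =>
    have : Nonempty α := Fintype.card_pos_iff.mp (by omega)
    refine card_perfectMatchings_le_of_card_fiber_le R fun i e he => ?_
    rw [card_filter_perfectMatchings_apply_eq R ((mem_perfectMatchings R).mp he i)]
    refine (ih (minor R i (e i)) (by simp [Fintype.card_subtype_compl, hn])).trans_eq ?_
    rw [prod_congr rfl fun a _ => congrArg bregmanFactor (card_minor_row R i (e i) a)]
    exact (prod_subtype (univ.erase i) (p := (· ≠ i)) (by simp)
      fun j => bregmanFactor #(({b | R j b} : Finset β).erase (e i))).symm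

end

lemma sum_eq_card_filter_eq_one {ι M : Type*} [AddCommMonoidWithOne M] [DecidableEq M]
    (s : Finset ι) (f : ι → M) (hf : ∀ i ∈ s, f i = 0 ∨ f i = 1) :
    ∑ i ∈ s, f i = #{i ∈ s | f i = 1} := by
  rw [← sum_boole]
  refine sum_congr rfl fun i hi => ?_
  rcases hf i hi with h | h <;> simp [h]

lemma prod_eq_ite_of_eq_zero_or_eq_one {ι M : Type*} [CommMonoidWithZero M] [DecidableEq M]
    (s : Finset ι) (f : ι → M) (hf : ∀ i ∈ s, f i = 0 ∨ f i = 1) :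
    ∏ i ∈ s, f i = if ∀ i ∈ s, f i = 1 then 1 else 0 := by
  split_ifs with h
  · exact prod_eq_one h
  · obtain ⟨i, hi, hfi⟩ := not_forall₂.mp h
    exact prod_eq_zero hi ((hf i hi).resolve_right hfi)

open Classical in
lemma perm_eq_card_perfectMatchings {n : ℕ} (A : Matrix (Fin n) (Fin n) ℝ)
    (h01 : ∀ i j, A i j = 0 ∨ A i j = 1) :
    perm A = #(perfectMatchings fun i j => A i j = 1) := by
  simp only [perm, prod_eq_ite_of_eq_zero_or_eq_one _ _ fun j _ => h01 j _, mem_univ,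
    true_implies, sum_boole, perfectMatchings]

theorem minc_bregman_general
    {n : ℕ} (A : Matrix (Fin n) (Fin n) ℝ)
    (h01 : ∀ i j, A i j = 0 ∨ A i j = 1)
    (r : Fin n → ℕ) (hr : ∀ i, (r i : ℝ) = ∑ j, A i j) :
    perm A ≤ ∏ i : Fin n, ((r i).factorial : ℝ) ^ (1 / (r i : ℝ)) := by
  classical
  have hrow : ∀ i, r i = #{j | A i j = 1} := fun i => by
    exact_mod_cast (hr i).trans (sum_eq_card_filter_eq_one _ _ fun j _ => h01 i j)
  rw [perm_eq_card_perfectMatchings A h01]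
  convert card_perfectMatchings_le_prod_bregmanFactor (fun i j => A i j = 1) using 2 with i
  rw [hrow, bregmanFactor, one_div]

/-- The Minc–Brègman bound: for an `n × n` matrix with 0/1 entries and row sums
`r i ≥ 1`, the permanent satisfies `per A ≤ ∏ i, (r i)!^(1 / r i)`. -/
theorem minc_bregman
    {n : ℕ} (A : Matrix (Fin n) (Fin n) ℝ)
    (h01 : ∀ i j, A i j = 0 ∨ A i j = 1)
    (r : Fin n → ℕ) (hr : ∀ i, (r i : ℝ) = ∑ j, A i j) (hr1 : ∀ i, 1 ≤ r i) :
    perm A ≤ ∏ i : Fin n, ((r i).factorial : ℝ) ^ (1 / (r i : ℝ)) :=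
  minc_bregman_general A h01 r hr
end

section
/- For every integer k ≥ 1, the increment δ(k) = γ(k) − γ(k−1) of γ(k) = (k!)^{1/k} (with γ(0) = 0) satisfies δ(k) ≤ 1; that is, (k!)^{1/k} ≤ ((k−1)!)^{1/(k−1)} + 1 for k ≥ 2, and δ(1) = 1. -/
/-- `γ 0 = 0` and `γ k = (k!)^(1/k)` for `k ≥ 1`. -/
noncomputable def gam : ℕ → ℝ
  | 0 => 0
  | (k + 1) => ((k + 1).factorial : ℝ) ^ (1 / ((k : ℝ) + 1))

/-- `δ k = γ k - γ (k - 1)`. -/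
noncomputable def del (k : ℕ) : ℝ := gam k - gam (k - 1)

lemma key_ineq (m : ℕ) (hm : 1 ≤ m) :
    (((m + 1).factorial : ℝ)) ^ (1 / ((m : ℝ) + 1)) ≤
      ((m.factorial : ℝ)) ^ (1 / (m : ℝ)) + 1 := by
  set a : ℝ := (m.factorial : ℝ) ^ (1 / (m : ℝ)) with ha_def
  have hfac : (0:ℝ) < (m.factorial : ℝ) := by positivity
  have ha : 0 ≤ a := Real.rpow_nonneg hfac.le _
  have hpow : a ^ m = (m.factorial : ℝ) := by
    rw [ha_def, one_div]
    exact Real.rpow_inv_natCast_pow hfac.le (by omega)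
  -- (m+1)! ≤ (a+1)^(m+1)
  have hbin : (((m+1).factorial : ℝ)) ≤ (a + 1) ^ (m + 1) := by
    have hfac1 : (((m+1).factorial : ℝ)) = ((m:ℝ) + 1) * a ^ m := by
      rw [hpow, Nat.factorial_succ]; push_cast; ring
    rw [hfac1, add_pow]
    have hmem : m ∈ Finset.range (m + 1 + 1) := Finset.mem_range.mpr (by omega)
    have := Finset.single_le_sum
      (f := fun i => a ^ i * 1 ^ (m + 1 - i) * ((m+1).choose i : ℝ))
      (fun i _ => by positivity) hmem
    calc ((m:ℝ) + 1) * a ^ m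
        = a ^ m * 1 ^ (m + 1 - m) * ((m+1).choose m : ℝ) := by
          rw [Nat.choose_succ_self_right]; push_cast; ring
      _ ≤ _ := this
  calc (((m + 1).factorial : ℝ)) ^ (1 / ((m : ℝ) + 1))
      ≤ ((a + 1) ^ (m + 1)) ^ (1 / ((m : ℝ) + 1)) := by
        apply Real.rpow_le_rpow (by positivity) _ (by positivity)
        exact_mod_cast hbin
    _ = a + 1 := by
        rw [one_div]
        have : ((m : ℝ) + 1) = ((m + 1 : ℕ) : ℝ) := by push_cast; ring
        rw [this]
        exact Real.pow_rpow_inv_natCast (by positivity) (by omega)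

/-- The increments `δ k = γ k - γ (k-1)` of `γ k = (k!)^(1/k)` (with `γ 0 = 0`) satisfy
`δ k ≤ 1` for all `k ≥ 1`; that is, `(k!)^(1/k) ≤ ((k-1)!)^(1/(k-1)) + 1` for `k ≥ 2`,
and `δ 1 = 1`. -/
theorem delta_le_one :
    (∀ k : ℕ, 1 ≤ k → del k ≤ 1) ∧
      (∀ k : ℕ, 2 ≤ k →
        (k.factorial : ℝ) ^ (1 / (k : ℝ)) ≤
          ((k - 1).factorial : ℝ) ^ (1 / ((k : ℝ) - 1)) + 1) ∧
      del 1 = 1 := by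
  have hdel1 : del 1 = 1 := by
    simp [del, gam]
  have h2 : ∀ k : ℕ, 2 ≤ k →
      (k.factorial : ℝ) ^ (1 / (k : ℝ)) ≤
        ((k - 1).factorial : ℝ) ^ (1 / ((k : ℝ) - 1)) + 1 := by
    intro k hk
    obtain ⟨m, rfl⟩ : ∃ m, k = m + 1 := ⟨k - 1, by omega⟩
    have hm : 1 ≤ m := by omega
    have := key_ineq m hm
    simpa [Nat.add_sub_cancel, add_sub_cancel_right] using this
  refine ⟨?_, h2, hdel1⟩
  intro k hk
  match k, hk with
  | 1, _ => exact le_of_eq hdel1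
  | (m + 2), _ =>
    have := key_ineq (m + 1) (by omega)
    simp only [del, Nat.add_sub_cancel, gam]
    push_cast at this ⊢
    linarith
end

section
/- Let A be an n × n matrix with nonnegative real entries. Then per(A) ≤ ∏_{i=1}^n ( Σ_{j=1}^n A(i,j) ), i.e., the permanent is bounded above by the product of the row sums. Moreover, the Soules bound is at least as tight: ∏_{i=1}^n Σ_{j=1}^n a*_{ij} δ(j) ≤ ∏_{i=1}^n Σ_{j=1}^n A(i,j), where a*_{i1} ≥ ⋯ ≥ a*_{in} is the nonincreasing rearrangement of row i, γ(0)=0, γ(k)=(k!)^{1/k}, and δ(k)=γ(k)−γ(k−1). -/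
/-!
Expanding `∏ i, ∑ j, A i j` gives one nonnegative term `∏ i, A i (f i)` for every map
`f : Fin n → Fin n`; the permanent keeps only the terms with `f` a permutation.

For the Soules bound it suffices that `0 ≤ δ k ≤ 1`, i.e. that `γ` is nondecreasing with
increments at most one: then each weighted row sum is at most the plain row sum. Both facts
follow from `γ k ^ k = k!` by comparing `(k + 1)`-th powers: `γ k ^ (k + 1) = γ k * k! ≤ (k + 1)!`
since `γ k ≤ k`, and `(γ k + 1) ^ (k + 1) ≥ (k + 1) * γ k ^ k = (k + 1)!` by Bernoulli.
-/

open Finset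
open scoped Nat

theorem perm_le_prod_sum {n : ℕ} (A : Matrix (Fin n) (Fin n) ℝ) (hA : ∀ i j, 0 ≤ A i j) :
    perm A ≤ ∏ i, ∑ j, A i j := by
  rw [perm, Fintype.prod_sum fun i j => A i j]
  calc ∑ σ : Equiv.Perm (Fin n), ∏ i, A i (σ i)
      = ∑ f ∈ univ.map (⟨_, DFunLike.coe_injective⟩ : Equiv.Perm (Fin n) ↪ (Fin n → Fin n)),
          ∏ i, A i (f i) := by rw [sum_map]; rfl
    _ ≤ ∑ f : Fin n → Fin n, ∏ i, A i (f i) :=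
      sum_le_sum_of_subset_of_nonneg (subset_univ _) fun f _ _ => prod_nonneg fun i _ => hA i (f i)

theorem gam_nonneg (k : ℕ) : 0 ≤ gam k := by
  cases k with
  | zero => exact le_rfl
  | succ k => exact Real.rpow_nonneg (Nat.cast_nonneg _) _

theorem gam_pow_self (k : ℕ) : gam k ^ k = k ! := by
  cases k with
  | zero => simp
  | succ k =>
    rw [gam, one_div, ← Nat.cast_succ]
    exact Real.rpow_inv_natCast_pow (Nat.cast_nonneg _) k.succ_ne_zero

theorem gam_le_self (k : ℕ) : gam k ≤ k := by
  rcases k.eq_zero_or_pos with rfl | hk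
  · simp [gam]
  rw [← pow_le_pow_iff_left₀ (gam_nonneg k) k.cast_nonneg hk.ne', gam_pow_self]
  exact_mod_cast k.factorial_le_pow

theorem gam_le_gam_succ (k : ℕ) : gam k ≤ gam (k + 1) := by
  rw [← pow_le_pow_iff_left₀ (gam_nonneg k) (gam_nonneg _) k.succ_ne_zero]
  calc gam k ^ (k + 1) = gam k * k ! := by rw [pow_succ', gam_pow_self]
    _ ≤ (k + 1) * k ! := by gcongr; linarith [gam_le_self k]
    _ = gam (k + 1) ^ (k + 1) := by rw [gam_pow_self, Nat.factorial_succ]; push_cast; rfl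

theorem gam_succ_le_add_one (k : ℕ) : gam (k + 1) ≤ gam k + 1 := by
  have hγ := gam_nonneg k
  rw [← pow_le_pow_iff_left₀ (gam_nonneg _) (by positivity) k.succ_ne_zero]
  calc gam (k + 1) ^ (k + 1) = (k + 1) * gam k ^ k := by
        rw [gam_pow_self, gam_pow_self, Nat.factorial_succ]; push_cast; rfl
    _ ≤ gam k ^ (k + 1) + (k + 1) * gam k ^ k := le_add_of_nonneg_left (by positivity)
    _ ≤ (gam k + 1) ^ (k + 1) := by
      simpa using pow_add_mul_le_add_pow hγ (by positivity : 0 ≤ 2 * gam k + 1) (k + 1)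

theorem del_nonneg (k : ℕ) : 0 ≤ del k := by
  cases k with
  | zero => simp [del]
  | succ k => simpa [del] using gam_le_gam_succ k

theorem del_le_one (k : ℕ) : del k ≤ 1 := by
  cases k with
  | zero => simp [del]
  | succ k => simpa [del, add_comm] using gam_succ_le_add_one k

theorem sum_comp_perm_mul_le_sum {ι R : Type*} [Fintype ι] [Semiring R] [PartialOrder R]
    [IsOrderedRing R] (a w : ι → R) (ha : ∀ j, 0 ≤ a j) (hw : ∀ j, w j ≤ 1) (σ : Equiv.Perm ι) :
    ∑ j, a (σ j) * w j ≤ ∑ j, a j :=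
  calc ∑ j, a (σ j) * w j ≤ ∑ j, a (σ j) :=
        sum_le_sum fun j _ => mul_le_of_le_one_right (ha _) (hw j)
    _ = ∑ j, a j := Equiv.sum_comp σ a

theorem permanent_le_row_sums_and_soules_tighter_general
    {n : ℕ} (A : Matrix (Fin n) (Fin n) ℝ) (hA : ∀ i j, 0 ≤ A i j)
    (τ : Fin n → Equiv.Perm (Fin n)) :
    perm A ≤ ∏ i : Fin n, ∑ j : Fin n, A i j ∧
      ∏ i : Fin n, ∑ j : Fin n, A i (τ i j) * del (j.val + 1) ≤
        ∏ i : Fin n, ∑ j : Fin n, A i j :=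
  ⟨perm_le_prod_sum A hA,
    prod_le_prod (fun i _ => sum_nonneg fun _ _ => mul_nonneg (hA i _) (del_nonneg _))
      fun i _ => sum_comp_perm_mul_le_sum (A i) _ (hA i) (fun _ => del_le_one _) (τ i)⟩

/-- The permanent of a nonnegative matrix is at most the product of its row sums, and
the Soules bound `∏ i, ∑ j, a*_{ij} δ j` (with `a*_{i1} ≥ ⋯ ≥ a*_{in}` the
nonincreasing rearrangement of row `i`) is at least as tight as the row-sum bound. -/
theorem permanent_le_row_sums_and_soules_tighter
    {n : ℕ} (A : Matrix (Fin n) (Fin n) ℝ) (hA : ∀ i j, 0 ≤ A i j)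
    (τ : Fin n → Equiv.Perm (Fin n))
    (h_sorted : ∀ i, Antitone (fun j => A i (τ i j))) :
    perm A ≤ ∏ i : Fin n, ∑ j : Fin n, A i j ∧
      ∏ i : Fin n, ∑ j : Fin n, A i (τ i j) * del (j.val + 1) ≤
        ∏ i : Fin n, ∑ j : Fin n, A i j :=
  permanent_le_row_sums_and_soules_tighter_general A hA τ
end
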